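/- Let (a_γ)_{γ∈Γ} be a family of complex numbers indexed by a countable set Γ such that for every integer k ≥ 1 the sum ∑_γ a_γ^k converges absolutely and equals 0. Then a_γ = 0 for every γ. -/

import Mathlib

open Filter Finset Complex Topology

private lemma cesaro_pow (w : ℂ) (hw : ‖w‖ = 1) :
    Tendsto (fun N : ℕ => ((N : ℝ)⁻¹ : ℝ) • ∑ i ∈ Finset.range N, w ^ (i + 1)) atTop
      (𝓝 (if w = 1 then 1 else 0)) := by
  rcases eq_or_ne w 1 with h | h
  · subst h
    simp only [one_pow, Finset.sum_const, Finset.card_range, if_pos rfl, nsmul_eq_mul, mul_one]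
    have heq : (fun N : ℕ => ((N : ℝ)⁻¹ : ℝ) • ((N : ℕ) : ℂ)) =ᶠ[atTop]
        fun _ => (1 : ℂ) := by
      filter_upwards [Filter.eventually_gt_atTop 0] with N hN
      have hN' : ((N : ℝ)) ≠ 0 := by positivity
      rw [Complex.real_smul]
      push_cast
      exact inv_mul_cancel₀ (by exact_mod_cast hN')
    exact Tendsto.congr' heq.symm tendsto_const_nhds
  · rw [if_neg h]
    apply squeeze_zero_norm (a := fun N : ℕ => ((N : ℝ)⁻¹) * (2 / ‖w - 1‖))
    · intro N
      have hgeom : ∑ i ∈ Finset.range N, w ^ (i + 1) = w * ((w ^ N - 1) / (w - 1)) := by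
        rw [Finset.sum_congr rfl fun i _ => pow_succ' w i, ← Finset.mul_sum, geom_sum_eq h]
      rw [norm_smul, hgeom]
      have h1 : ‖w * ((w ^ N - 1) / (w - 1))‖ ≤ 2 / ‖w - 1‖ := by
        rw [norm_mul, hw, one_mul, norm_div]
        gcongr
        calc ‖w ^ N - 1‖ ≤ ‖w ^ N‖ + ‖(1 : ℂ)‖ := norm_sub_le _ _
          _ = 1 + 1 := by rw [norm_pow, hw, one_pow, norm_one]
          _ = 2 := by norm_num
      calc ‖((N : ℝ)⁻¹ : ℝ)‖ * ‖w * ((w ^ N - 1) / (w - 1))‖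
          ≤ ‖((N : ℝ)⁻¹ : ℝ)‖ * (2 / ‖w - 1‖) := by
            apply mul_le_mul_of_nonneg_left h1 (norm_nonneg _)
        _ = ((N : ℝ)⁻¹) * (2 / ‖w - 1‖) := by
            rw [Real.norm_eq_abs, _root_.abs_of_nonneg (by positivity)]
    · simpa using tendsto_inv_atTop_nhds_zero_nat.mul_const (2 / ‖w - 1‖)

/-- Key auxiliary lemma: normalized version leading to a contradiction. -/
private lemma aux {Γ : Type*} [Countable Γ] (b : Γ → ℂ)
    (hb : Summable fun γ => ‖b γ‖) (Fs : Finset Γ) (hFne : Fs.Nonempty)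
    (hF1 : ∀ γ ∈ Fs, ‖b γ‖ = 1) (ρ : ℝ) (hρ0 : 0 ≤ ρ) (hρ : ρ < 1)
    (hout : ∀ γ ∉ Fs, ‖b γ‖ ≤ ρ)
    (hz : ∀ k : ℕ, 1 ≤ k → ∑' γ, b γ ^ k = 0) : False := by
  have hble : ∀ γ, ‖b γ‖ ≤ 1 := by
    intro γ
    by_cases hγ : γ ∈ Fs
    · exact (hF1 γ hγ).le
    · exact (hout γ hγ).trans hρ.le
  -- summability of powers
  have hsumk : ∀ k : ℕ, 1 ≤ k → Summable fun γ => b γ ^ k := by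
    intro k hk
    apply Summable.of_norm
    apply hb.of_nonneg_of_le (fun γ => norm_nonneg _)
    intro γ
    rw [norm_pow]
    calc ‖b γ‖ ^ k ≤ ‖b γ‖ ^ 1 :=
          pow_le_pow_of_le_one (norm_nonneg _) (hble γ) hk
      _ = ‖b γ‖ := pow_one _
  set f : ℕ → ℂ := fun k => ∑ γ ∈ Fs, b γ ^ k with hf
  set C : ℝ := ∑' γ, ‖b γ‖ with hC
  -- bound on f
  have hfb : ∀ k : ℕ, 1 ≤ k → ‖f k‖ ≤ ρ ^ (k - 1) * C := by
    intro k hk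
    have hsplit := Summable.sum_add_tsum_compl (s := Fs) (hsumk k hk)
    rw [hz k hk] at hsplit
    have hfR : f k = -∑' (γ : ↥(↑Fs : Set Γ)ᶜ), b γ ^ k := by
      rw [hf]; linear_combination hsplit
    rw [hfR, norm_neg]
    have hsub : Summable fun γ : ↥(↑Fs : Set Γ)ᶜ => ‖b γ ^ (k : ℕ)‖ :=
      ((hsumk k hk).subtype _).norm
    calc ‖∑' (γ : ↥(↑Fs : Set Γ)ᶜ), b γ ^ k‖
        ≤ ∑' (γ : ↥(↑Fs : Set Γ)ᶜ), ‖b γ ^ k‖ := norm_tsum_le_tsum_norm hsub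
      _ ≤ ∑' (γ : ↥(↑Fs : Set Γ)ᶜ), ρ ^ (k - 1) * ‖b (γ : Γ)‖ := by
          apply Summable.tsum_le_tsum _ hsub ((hb.subtype _).mul_left _)
          rintro ⟨γ, hγ⟩
          have hγ' : γ ∉ Fs := hγ
          rw [norm_pow]
          calc ‖b γ‖ ^ k = ‖b γ‖ ^ (k - 1) * ‖b γ‖ ^ 1 := by
                rw [← pow_add]; congr 1; omega
            _ ≤ ρ ^ (k - 1) * ‖b γ‖ := by
                rw [pow_one]
                apply mul_le_mul_of_nonneg_right _ (norm_nonneg _)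
                exact pow_le_pow_left₀ (norm_nonneg _) (hout γ hγ') _
      _ = ρ ^ (k - 1) * ∑' (γ : ↥(↑Fs : Set Γ)ᶜ), ‖b (γ : Γ)‖ := tsum_mul_left
      _ ≤ ρ ^ (k - 1) * C := by
          apply mul_le_mul_of_nonneg_left _ (by positivity)
          exact Summable.tsum_subtype_le (fun γ => ‖b γ‖) _ (fun γ => norm_nonneg _) hb
  -- f (k+1) → 0
  have hf0 : Tendsto (fun k : ℕ => f (k + 1)) atTop (𝓝 0) := by
    apply squeeze_zero_norm (a := fun k : ℕ => ρ ^ k * C)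
    · intro k
      simpa using hfb (k + 1) (by omega)
    · simpa using (tendsto_pow_atTop_nhds_zero_of_lt_one hρ0 hρ).mul_const C
  -- Cesàro average of |f (k+1)|² tends to 0
  have hc0 : Tendsto (fun k : ℕ => f (k + 1) * (starRingEnd ℂ) (f (k + 1))) atTop (𝓝 0) := by
    have := hf0.mul ((Complex.continuous_conj.tendsto 0).comp hf0)
    simpa using this
  have hA0 : Tendsto (fun N : ℕ => ((N : ℝ)⁻¹ : ℝ) •
      ∑ i ∈ Finset.range N, (f (i + 1) * (starRingEnd ℂ) (f (i + 1)))) atTop (𝓝 0) := by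
    simpa using hc0.cesaro_smul
  -- Cesàro average computed as double sum
  set L : ℂ := ∑ γ ∈ Fs, ∑ δ ∈ Fs,
      (if b γ * (starRingEnd ℂ) (b δ) = 1 then (1 : ℂ) else 0) with hL
  have hAL : Tendsto (fun N : ℕ => ((N : ℝ)⁻¹ : ℝ) •
      ∑ i ∈ Finset.range N, (f (i + 1) * (starRingEnd ℂ) (f (i + 1)))) atTop (𝓝 L) := by
    have hexp : ∀ N : ℕ, ((N : ℝ)⁻¹ : ℝ) •
        ∑ i ∈ Finset.range N, (f (i + 1) * (starRingEnd ℂ) (f (i + 1)))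
        = ∑ γ ∈ Fs, ∑ δ ∈ Fs, ((N : ℝ)⁻¹ : ℝ) •
            ∑ i ∈ Finset.range N, (b γ * (starRingEnd ℂ) (b δ)) ^ (i + 1) := by
      intro N
      have : ∀ i : ℕ, f (i + 1) * (starRingEnd ℂ) (f (i + 1))
          = ∑ γ ∈ Fs, ∑ δ ∈ Fs, (b γ * (starRingEnd ℂ) (b δ)) ^ (i + 1) := by
        intro i
        rw [hf]
        rw [map_sum, Finset.sum_mul_sum]
        apply Finset.sum_congr rfl; intro γ _
        apply Finset.sum_congr rfl; intro δ _
        rw [mul_pow, map_pow]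
      simp only [this, Finset.smul_sum]
      rw [Finset.sum_comm]
      exact Finset.sum_congr rfl fun γ _ => Finset.sum_comm
    apply Tendsto.congr (fun N => (hexp N).symm)
    rw [hL]
    apply tendsto_finset_sum
    intro γ hγ
    apply tendsto_finset_sum
    intro δ hδ
    apply cesaro_pow
    rw [norm_mul, RCLike.norm_conj, hF1 γ hγ, hF1 δ hδ, one_mul]
  have hLzero : L = 0 := tendsto_nhds_unique hAL hA0
  -- but L has real part ≥ 1
  obtain ⟨γ₀, hγ₀⟩ := hFne
  have hre : (1 : ℝ) ≤ L.re := by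
    rw [hL, Complex.re_sum]
    have hterm : ∀ γ ∈ Fs, (0 : ℝ) ≤
        (∑ δ ∈ Fs, (if b γ * (starRingEnd ℂ) (b δ) = 1 then (1 : ℂ) else 0)).re := by
      intro γ _
      rw [Complex.re_sum]
      apply Finset.sum_nonneg
      intro δ _
      split <;> simp
    have hdiag : (1 : ℝ) ≤
        (∑ δ ∈ Fs, (if b γ₀ * (starRingEnd ℂ) (b δ) = 1 then (1 : ℂ) else 0)).re := by
      rw [Complex.re_sum]
      have h1 : b γ₀ * (starRingEnd ℂ) (b γ₀) = 1 := by
        rw [Complex.mul_conj]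
        norm_cast
        rw [Complex.normSq_eq_norm_sq]
        have := hF1 γ₀ hγ₀
        rw [this]; norm_num
      calc (1 : ℝ) = (if b γ₀ * (starRingEnd ℂ) (b γ₀) = 1 then (1 : ℂ) else 0).re := by
            rw [if_pos h1]; simp
        _ ≤ _ := by
            apply Finset.single_le_sum
              (f := fun δ => (if b γ₀ * (starRingEnd ℂ) (b δ) = 1 then (1 : ℂ) else 0).re)
              _ hγ₀
            intro δ _
            split <;> simp
    calc (1 : ℝ) ≤ _ := hdiag
      _ ≤ _ := Finset.single_le_sum hterm hγ₀
  rw [hLzero] at hre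
  simp at hre
  linarith

/-- If `(a γ)` is a countable family of complex numbers such that for every `k ≥ 1`
the sum `∑ γ, a γ ^ k` converges absolutely and equals `0`, then every `a γ = 0`. -/
theorem stmt0 {Γ : Type*} [Countable Γ] (a : Γ → ℂ)
    (hsum : ∀ k : ℕ, 1 ≤ k → Summable fun γ => ‖a γ ^ k‖)
    (hzero : ∀ k : ℕ, 1 ≤ k → ∑' γ, a γ ^ k = 0) :
    ∀ γ, a γ = 0 := by
  classical
  by_contra hcon
  push_neg at hcon
  obtain ⟨γ₀, hγ₀⟩ := hcon
  have h1 : Summable fun γ => ‖a γ‖ := by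
    simpa using hsum 1 le_rfl
  have hε₀ : 0 < ‖a γ₀‖ := norm_pos_iff.mpr hγ₀
  -- finite sets of large terms
  have hfin : ∀ ε : ℝ, 0 < ε → {γ : Γ | ε ≤ ‖a γ‖}.Finite := by
    intro ε hε
    have h2 : ∀ᶠ γ in Filter.cofinite, ‖a γ‖ < ε :=
      h1.tendsto_cofinite_zero.eventually_lt_const hε
    simpa [not_lt] using Filter.eventually_cofinite.mp h2
  -- the global maximum
  have hGfin : {γ : Γ | ‖a γ₀‖ ≤ ‖a γ‖}.Finite := hfin _ hε₀
  obtain ⟨γM, hγM, hmax⟩ := Set.exists_max_image _ (fun γ => ‖a γ‖) hGfin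
    ⟨γ₀, by simp⟩
  set M : ℝ := ‖a γM‖ with hM
  have hM0 : 0 < M := lt_of_lt_of_le hε₀ hγM
  have hMmax : ∀ γ, ‖a γ‖ ≤ M := by
    intro γ
    by_cases hγ : ‖a γ₀‖ ≤ ‖a γ‖
    · exact hmax γ hγ
    · exact (not_le.mp hγ).le.trans hγM
  -- the set attaining the maximum
  have hFfin : {γ : Γ | ‖a γ‖ = M}.Finite := by
    apply (hfin (M / 2) (by linarith)).subset
    intro γ hγ
    simp only [Set.mem_setOf_eq] at *
    linarith
  set Fs : Finset Γ := hFfin.toFinset with hFs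
  have hFne : Fs.Nonempty := ⟨γM, hFfin.mem_toFinset.mpr rfl⟩
  have hmemF : ∀ γ, γ ∈ Fs ↔ ‖a γ‖ = M := fun γ => hFfin.mem_toFinset
  -- the second largest value
  set G2 : Finset Γ := (hfin (M / 2) (by linarith)).toFinset with hG2
  set rs : Finset ℝ := insert (M / 2) ((G2 \ Fs).image fun γ => ‖a γ‖) with hrs
  have hrsne : rs.Nonempty := ⟨M / 2, by simp [hrs]⟩
  set r : ℝ := rs.max' hrsne with hr
  have hrM : r < M := by
    rw [hr]
    apply (Finset.max'_lt_iff _ _).mpr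
    intro x hx
    rw [hrs] at hx
    rcases Finset.mem_insert.mp hx with h | h
    · subst h; linarith
    · obtain ⟨γ, hγ, rfl⟩ := Finset.mem_image.mp h
      have : γ ∉ Fs := (Finset.mem_sdiff.mp hγ).2
      exact lt_of_le_of_ne (hMmax γ) (fun h => this ((hmemF γ).mpr h))
  have hr0 : 0 ≤ r := le_trans (by linarith : (0:ℝ) ≤ M / 2)
    (Finset.le_max' _ _ (by simp [hrs]))
  have hrout : ∀ γ ∉ Fs, ‖a γ‖ ≤ r := by
    intro γ hγ
    by_cases h2 : M / 2 ≤ ‖a γ‖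
    · apply Finset.le_max'
      rw [hrs]
      apply Finset.mem_insert_of_mem
      exact Finset.mem_image.mpr ⟨γ, Finset.mem_sdiff.mpr
        ⟨(hfin (M / 2) (by linarith)).mem_toFinset.mpr h2, hγ⟩, rfl⟩
    · exact (not_le.mp h2).le.trans (Finset.le_max' _ _ (by simp [hrs]))
  -- normalize
  set b : Γ → ℂ := fun γ => a γ / (M : ℂ) with hb
  have hMC : (M : ℂ) ≠ 0 := by
    norm_cast; exact hM0.ne'
  have hbnorm : ∀ γ, ‖b γ‖ = ‖a γ‖ / M := by
    intro γ
    rw [hb]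
    rw [norm_div]
    congr 1
    rw [Complex.norm_real, Real.norm_eq_abs, abs_of_pos hM0]
  apply aux b _ Fs hFne _ (r / M) (by positivity) (by
      rw [div_lt_one hM0]; exact hrM) _ _
  · apply Summable.of_nonneg_of_le (fun γ => norm_nonneg _) (fun γ => ?_)
      (h1.mul_right M⁻¹)
    rw [hbnorm, div_eq_mul_inv]
  · intro γ hγ
    rw [hbnorm, (hmemF γ).mp hγ, div_self hM0.ne']
  · intro γ hγ
    rw [hbnorm]
    gcongr
    exact hrout γ hγ
  · intro k hk
    have : ∀ γ, b γ ^ k = a γ ^ k / (M : ℂ) ^ k := by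
      intro γ; rw [hb, div_pow]
    simp only [this]
    rw [tsum_div_const, hzero k hk, zero_div]
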